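/- arXiv:1311.2361 — 2 statements merged into one kernel-verified Lean document; each statement's English description precedes it below -/
import Mathlib

section
/- Let A be a noninvertible matrix of class S_n. Then p(A) = a(A) or p(A) = ∞ (i.e., every power A^ℓ is a partial isometry). -/
open Matrix

noncomputable section

/-- An `ι`-by-`ι` complex matrix `A` is a *partial isometry* if `‖Ax‖ = ‖x‖` for every
vector `x` in the orthogonal complement of `ker A` (Euclidean structure). -/
def Matrix.IsPartialIsometry {ι : Type*} [Fintype ι] [DecidableEq ι]
    (A : Matrix ι ι ℂ) : Prop :=
  ∀ x ∈ (LinearMap.ker (Matrix.toEuclideanLin A))ᗮ, ‖Matrix.toEuclideanLin A x‖ = ‖x‖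

/-- The *power partial isometry index* `p(A)`: the supremum (in `ℕ∞`, possibly `⊤`) of the
nonnegative integers `j` such that `I, A, A², …, A^j` are all partial isometries. -/
def Matrix.pIndex {ι : Type*} [Fintype ι] [DecidableEq ι] (A : Matrix ι ι ℂ) : ℕ∞ :=
  sSup ((↑) '' {j : ℕ | ∀ i ≤ j, (A ^ i).IsPartialIsometry})

/-- The *ascent* `a(A)`: the smallest nonnegative integer `k` with `ker A^k = ker A^(k+1)`. -/
def Matrix.ascent {ι : Type*} [Fintype ι] [DecidableEq ι] (A : Matrix ι ι ℂ) : ℕ :=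
  sInf {k : ℕ | LinearMap.ker (Matrix.toEuclideanLin (A ^ k)) =
    LinearMap.ker (Matrix.toEuclideanLin (A ^ (k + 1)))}

/-- `A` is unitarily similar to `B` (allowing different, necessarily equipotent, index types):
`B = U* A U` for some unitary `U`. -/
def Matrix.UnitarilySimilarTo {ι κ : Type*} [Fintype ι] [Fintype κ] [DecidableEq ι]
    [DecidableEq κ] (A : Matrix ι ι ℂ) (B : Matrix κ κ ℂ) : Prop :=
  ∃ U : Matrix ι κ ℂ, Uᴴ * U = 1 ∧ U * Uᴴ = 1 ∧ B = Uᴴ * A * U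

/-- The `q`-by-`q` nilpotent Jordan block `J_q`. -/
def JordanBlock (q : ℕ) : Matrix (Fin q) (Fin q) ℂ :=
  Matrix.of fun a b => if (b : ℕ) = (a : ℕ) + 1 then 1 else 0

/-- `A` is of class `S_n`: a contraction whose eigenvalues all have moduli strictly
less than `1` and with `rank (1 - A*A) = 1`. -/
def Matrix.IsClassSn {n : ℕ} (A : Matrix (Fin n) (Fin n) ℂ) : Prop :=
  (∀ x : EuclideanSpace ℂ (Fin n), ‖Matrix.toEuclideanLin A x‖ ≤ ‖x‖) ∧
  (∀ z ∈ spectrum ℂ A, ‖z‖ < 1) ∧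
  (1 - Aᴴ * A).rank = 1

/-! Let `T` be `A` acting on `ℂⁿ`. The defect `1 - T*T` is positive of rank one, hence equal to
`d d*` for a vector `d`, and induction on `j` gives
`‖T^j x‖² = ‖x‖² - ∑_{i<j} |⟪T*^i d, x⟫|²`. Therefore `ker T^j ⊆ span {T*^i d | i < j}`; as the
kernels grow strictly up to the ascent `a`, this is an equality for `j ≤ a`, and `T^j` is then
isometric on `(ker T^j)ᗮ`. If `ker T^a` is the whole space, `T^j = 0` for all `j ≥ a`. Otherwise,
were `T^(a+1)` a partial isometry, the vector `T*^a d ∈ (ker T^a)ᗮ = (ker T^(a+1))ᗮ` would be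
orthogonal to itself, hence zero; then every power of `T` is isometric on `(ker T^a)ᗮ ≠ 0`,
which Gelfand's formula rules out since the spectral radius of `A` is `< 1`. -/

open LinearMap Module Submodule Filter
open scoped InnerProductSpace

theorem spectrum.exists_norm_pow_lt_one {A : Type*} [NormedRing A] [NormedAlgebra ℂ A]
    [CompleteSpace A] (a : A) (h : ∀ z ∈ spectrum ℂ a, ‖z‖ < 1) : ∃ j, ‖a ^ j‖ < 1 := by
  cases subsingleton_or_nontrivial A
  · exact ⟨0, by simp [Subsingleton.elim (1 : A) 0]⟩
  have hρ : spectralRadius ℂ a < 1 := by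
    simpa using spectrum.spectralRadius_lt_of_forall_lt a (r := 1) fun z hz => by
      simpa [← NNReal.coe_lt_coe] using h z hz
  obtain ⟨j, hj, hj1⟩ := ((spectrum.pow_nnnorm_pow_one_div_tendsto_nhds_spectralRadius a
    |>.eventually_lt_const hρ).and (eventually_ge_atTop 1)).exists
  refine ⟨j, ?_⟩
  by_contra! hge
  have : (1 : ENNReal) ≤ ‖a ^ j‖₊ := by exact_mod_cast hge
  exact hj.not_ge (ENNReal.one_le_rpow this (by positivity))

theorem Module.End.le_finrank_ker_pow {K V : Type*} [DivisionRing K] [AddCommGroup V]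
    [Module K V] [FiniteDimensional K V] {f : End K V} {a : ℕ}
    (h : ∀ k < a, ker (f ^ k) ≠ ker (f ^ (k + 1))) {j : ℕ} (hj : j ≤ a) :
    j ≤ finrank K (ker (f ^ j)) := by
  induction j with
  | zero => exact Nat.zero_le _
  | succ j ih =>
    have hlt : ker (f ^ j) < ker (f ^ (j + 1)) := by
      refine lt_of_le_of_ne ?_ (h j hj)
      rw [pow_succ']
      exact ker_le_ker_comp _ _
    exact (ih (by omega)).trans_lt (finrank_lt_finrank_of_lt hlt)

variable {𝕜 E : Type*} [RCLike 𝕜] [NormedAddCommGroup E] [InnerProductSpace 𝕜 E]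
  [FiniteDimensional 𝕜 E]

namespace LinearMap

theorem isPositive_one_sub_adjoint_mul_self {T : E →ₗ[𝕜] E} (hT : ∀ x, ‖T x‖ ≤ ‖x‖) :
    (1 - T.adjoint * T).IsPositive := by
  refine ⟨isPositive_one.isSymmetric.sub (isPositive_adjoint_comp_self T).isSymmetric, fun x => ?_⟩
  have : ‖T x‖ ^ 2 ≤ ‖x‖ ^ 2 := pow_le_pow_left₀ (norm_nonneg _) (hT x) 2
  simpa [inner_sub_left, adjoint_inner_left, ← real_inner_self_eq_norm_sq] using this

theorem IsPositive.exists_eq_inner_smul_self {S : E →ₗ[𝕜] E} (hS : S.IsPositive)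
    (h : finrank 𝕜 (range S) ≤ 1) : ∃ d : E, ∀ y, S y = ⟪d, y⟫_𝕜 • d := by
  obtain ⟨u, hu⟩ := ((range S).finrank_le_one_iff_isPrincipal.mp h).principal
  have hproj : ∀ y, S y = (⟪u, S y⟫_𝕜 / ((‖u‖ ^ 2 : ℝ) : 𝕜)) • u := fun y => by
    rw [← starProjection_singleton, eq_comm, starProjection_eq_self_iff, ← hu]
    exact mem_range_self S y
  set r : ℝ := RCLike.re ⟪S u, u⟫_𝕜
  have hr : ⟪S u, u⟫_𝕜 = r := (hS.isSymmetric.coe_re_inner_apply_self u).symm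
  have hsqrt : (r : 𝕜) = √r * √r := by
    exact_mod_cast (Real.mul_self_sqrt (hS.re_inner_nonneg_left u)).symm
  have hSu : S u = ((r / ‖u‖ ^ 2 : ℝ) : 𝕜) • u := by
    rw [hproj u, ← hS.isSymmetric, hr]
    push_cast
    rfl
  refine ⟨((√r / ‖u‖ ^ 2 : ℝ) : 𝕜) • u, fun y => ?_⟩
  rw [hproj y, ← hS.isSymmetric, hSu, inner_smul_left, inner_smul_left, smul_smul,
    RCLike.conj_ofReal, RCLike.conj_ofReal]
  congr 1
  push_cast
  linear_combination (⟪u, y⟫_𝕜 / (‖u‖ : 𝕜) ^ 4) * hsqrt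

theorem exists_adjoint_apply_apply_eq_sub_inner_smul {T : E →ₗ[𝕜] E} (hT : ∀ x, ‖T x‖ ≤ ‖x‖)
    (h : finrank 𝕜 (range (1 - T.adjoint * T)) ≤ 1) :
    ∃ d : E, ∀ y, T.adjoint (T y) = y - ⟪d, y⟫_𝕜 • d := by
  obtain ⟨d, hd⟩ := (isPositive_one_sub_adjoint_mul_self hT).exists_eq_inner_smul_self h
  refine ⟨d, fun y => ?_⟩
  rw [← hd, LinearMap.sub_apply, Module.End.one_apply, Module.End.mul_apply, sub_sub_cancel]

theorem adjoint_pow (T : E →ₗ[𝕜] E) (j : ℕ) : (T ^ j).adjoint = T.adjoint ^ j := by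
  rw [← star_eq_adjoint, star_pow, star_eq_adjoint]

variable {T : E →ₗ[𝕜] E} {d : E}

theorem adjoint_pow_apply_pow_apply (hd : ∀ y, T.adjoint (T y) = y - ⟪d, y⟫_𝕜 • d)
    (j : ℕ) (y : E) :
    (T ^ j).adjoint ((T ^ j) y) =
      y - ∑ i ∈ Finset.range j, ⟪(T.adjoint ^ i) d, y⟫_𝕜 • (T.adjoint ^ i) d := by
  induction j generalizing y with
  | zero => simp [← star_eq_adjoint]
  | succ j ih =>
    have hshift : ∀ i, ⟪(T.adjoint ^ i) d, T y⟫_𝕜 • T.adjoint ((T.adjoint ^ i) d) =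
        ⟪(T.adjoint ^ (i + 1)) d, y⟫_𝕜 • (T.adjoint ^ (i + 1)) d := fun i => by
      rw [pow_succ', Module.End.mul_apply, adjoint_inner_left]
    rw [pow_succ, ← star_eq_adjoint, star_mul, star_eq_adjoint, star_eq_adjoint,
      Module.End.mul_apply, Module.End.mul_apply, ih, map_sub, hd, map_sum,
      Finset.sum_range_succ']
    simp only [map_smul, hshift, pow_zero, Module.End.one_apply]
    abel

theorem norm_pow_apply_sq (hd : ∀ y, T.adjoint (T y) = y - ⟪d, y⟫_𝕜 • d) (j : ℕ) (x : E) :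
    ‖(T ^ j) x‖ ^ 2 = ‖x‖ ^ 2 - ∑ i ∈ Finset.range j, ‖⟪(T.adjoint ^ i) d, x⟫_𝕜‖ ^ 2 := by
  have h := congrArg (fun z => RCLike.re ⟪x, z⟫_𝕜) (adjoint_pow_apply_pow_apply hd j x)
  simpa only [adjoint_inner_right, inner_sub_right, inner_sum, inner_smul_right,
    ← inner_conj_symm x ((T.adjoint ^ _) d), RCLike.mul_conj, map_sub, map_sum,
    inner_self_eq_norm_sq, ← RCLike.ofReal_pow, RCLike.ofReal_re] using h

theorem norm_pow_apply_eq_iff (hd : ∀ y, T.adjoint (T y) = y - ⟪d, y⟫_𝕜 • d) {j : ℕ} {x : E} :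
    ‖(T ^ j) x‖ = ‖x‖ ↔ ∀ i < j, ⟪(T.adjoint ^ i) d, x⟫_𝕜 = 0 := by
  rw [← sq_eq_sq₀ (norm_nonneg _) (norm_nonneg _), norm_pow_apply_sq hd, sub_eq_self,
    Finset.sum_eq_zero_iff_of_nonneg fun _ _ => sq_nonneg _]
  simp

theorem ker_pow_le_span (hd : ∀ y, T.adjoint (T y) = y - ⟪d, y⟫_𝕜 • d) (j : ℕ) :
    ker (T ^ j) ≤ span 𝕜 (Set.range fun i : Fin j => (T.adjoint ^ (i : ℕ)) d) := by
  intro y hy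
  have hy' := adjoint_pow_apply_pow_apply hd j y
  rw [mem_ker.mp hy, map_zero, eq_comm, sub_eq_zero] at hy'
  rw [hy']
  exact sum_mem fun i hi => smul_mem _ _ (subset_span ⟨⟨i, Finset.mem_range.mp hi⟩, rfl⟩)

theorem ker_pow_eq_span (hd : ∀ y, T.adjoint (T y) = y - ⟪d, y⟫_𝕜 • d) {j : ℕ}
    (hj : j ≤ finrank 𝕜 (ker (T ^ j))) :
    ker (T ^ j) = span 𝕜 (Set.range fun i : Fin j => (T.adjoint ^ (i : ℕ)) d) :=
  eq_of_le_of_finrank_le (ker_pow_le_span hd j) <|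
    (finrank_range_le_card _).trans <| (Fintype.card_fin j).trans_le hj

theorem norm_pow_apply_eq_of_mem_orthogonal_ker (hd : ∀ y, T.adjoint (T y) = y - ⟪d, y⟫_𝕜 • d)
    {j : ℕ} (hj : j ≤ finrank 𝕜 (ker (T ^ j))) {x : E} (hx : x ∈ (ker (T ^ j))ᗮ) :
    ‖(T ^ j) x‖ = ‖x‖ :=
  (norm_pow_apply_eq_iff hd).mpr fun i hi =>
    inner_right_of_mem_orthogonal (ker_pow_eq_span hd hj ▸ subset_span ⟨⟨i, hi⟩, rfl⟩) hx

theorem exists_mem_orthogonal_ker_pow_succ_norm_ne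
    (hd : ∀ y, T.adjoint (T y) = y - ⟪d, y⟫_𝕜 • d) (hT : ∀ x ≠ 0, ∃ j, ‖(T ^ j) x‖ < ‖x‖)
    {a : ℕ} (ha : ker (T ^ a) = ker (T ^ (a + 1))) (hdim : a ≤ finrank 𝕜 (ker (T ^ a)))
    (htop : ker (T ^ a) ≠ ⊤) : ∃ x ∈ (ker (T ^ (a + 1)))ᗮ, ‖(T ^ (a + 1)) x‖ ≠ ‖x‖ := by
  by_contra! hiso
  rw [← ha] at hiso
  have hva : (T.adjoint ^ a) d = 0 := by
    have hmem : (T.adjoint ^ a) d ∈ (ker (T ^ a))ᗮ := by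
      rw [orthogonal_ker, adjoint_pow]
      exact mem_range_self _ d
    exact inner_self_eq_zero.mp ((norm_pow_apply_eq_iff hd).mp (hiso _ hmem) a a.lt_succ_self)
  obtain ⟨x, hx, hx0⟩ := exists_mem_ne_zero_of_ne_bot (orthogonal_eq_bot_iff.not.mpr htop)
  obtain ⟨j, hj⟩ := hT x hx0
  refine hj.ne ((norm_pow_apply_eq_iff hd).mpr fun i _ => ?_)
  rcases lt_or_ge i a with hi | hi
  · exact inner_right_of_mem_orthogonal (ker_pow_eq_span hd hdim ▸ subset_span ⟨⟨i, hi⟩, rfl⟩) hx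
  · rw [← Nat.sub_add_cancel hi, pow_add, Module.End.mul_apply, hva, map_zero, inner_zero_left]

end LinearMap

namespace Matrix

variable {ι : Type*} [Fintype ι] [DecidableEq ι]

theorem toEuclideanLin_pow (A : Matrix ι ι 𝕜) (k : ℕ) :
    toEuclideanLin (A ^ k) = toEuclideanLin A ^ k := by
  rw [← coe_toEuclideanCLM_eq_toEuclideanLin, map_pow, ContinuousLinearMap.toLinearMap_pow]
  rfl

theorem toEuclideanLin_one_sub_conjTranspose_mul_self (A : Matrix ι ι 𝕜) :
    toEuclideanLin (1 - Aᴴ * A) = 1 - (toEuclideanLin A).adjoint * toEuclideanLin A := by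
  rw [← coe_toEuclideanCLM_eq_toEuclideanLin, ← star_eq_conjTranspose, map_sub, map_one, map_mul,
    map_star]
  rfl

theorem finrank_range_toEuclideanLin (M : Matrix ι ι 𝕜) :
    finrank 𝕜 (range (toEuclideanLin M)) = M.rank := by
  rw [rank_eq_finrank_range_toLin M (EuclideanSpace.basisFun ι 𝕜).toBasis
    (EuclideanSpace.basisFun ι 𝕜).toBasis]
  rfl

theorem exists_norm_toEuclideanLin_pow_apply_lt {A : Matrix ι ι ℂ}
    (h : ∀ z ∈ spectrum ℂ A, ‖z‖ < 1) {x : EuclideanSpace ℂ ι} (hx : x ≠ 0) :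
    ∃ j, ‖(toEuclideanLin A ^ j) x‖ < ‖x‖ := by
  obtain ⟨j, hj⟩ := spectrum.exists_norm_pow_lt_one (toEuclideanCLM (𝕜 := ℂ) A)
    (by rwa [AlgEquiv.spectrum_eq])
  refine ⟨j, ?_⟩
  calc ‖(toEuclideanLin A ^ j) x‖ = ‖(toEuclideanCLM (𝕜 := ℂ) A ^ j) x‖ := by
        rw [← toEuclideanLin_pow, ← coe_toEuclideanCLM_eq_toEuclideanLin, map_pow]
        rfl
    _ ≤ ‖toEuclideanCLM (𝕜 := ℂ) A ^ j‖ * ‖x‖ := ContinuousLinearMap.le_opNorm _ _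
    _ < ‖x‖ := mul_lt_of_lt_one_left (norm_pos_iff.mpr hx) hj

theorem isPartialIsometry_pow_iff (A : Matrix ι ι ℂ) (j : ℕ) :
    (A ^ j).IsPartialIsometry ↔
      ∀ x ∈ (ker (toEuclideanLin A ^ j))ᗮ, ‖(toEuclideanLin A ^ j) x‖ = ‖x‖ := by
  rw [IsPartialIsometry, toEuclideanLin_pow]

theorem ker_pow_ascent_eq (A : Matrix ι ι ℂ) :
    ker (toEuclideanLin A ^ A.ascent) = ker (toEuclideanLin A ^ (A.ascent + 1)) := by
  obtain ⟨k, -, hk⟩ := Module.End.exists_ker_pow_eq_ker_pow_succ (toEuclideanLin A)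
  have hmem : A.ascent ∈ {k : ℕ | ker (toEuclideanLin (A ^ k)) =
      ker (toEuclideanLin (A ^ (k + 1)))} :=
    Nat.sInf_mem ⟨k, by simpa only [Set.mem_ofPred_eq, toEuclideanLin_pow] using hk⟩
  simpa only [Set.mem_ofPred_eq, toEuclideanLin_pow] using hmem

theorem ker_pow_ne_of_lt_ascent (A : Matrix ι ι ℂ) {k : ℕ} (hk : k < A.ascent) :
    ker (toEuclideanLin A ^ k) ≠ ker (toEuclideanLin A ^ (k + 1)) := by
  simpa only [Set.mem_ofPred_eq, toEuclideanLin_pow] using Nat.notMem_of_lt_sInf hk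

theorem pIndex_eq_of_not_isPartialIsometry_pow_succ {A : Matrix ι ι ℂ} {m : ℕ}
    (h : ∀ i ≤ m, (A ^ i).IsPartialIsometry) (h' : ¬ (A ^ (m + 1)).IsPartialIsometry) :
    A.pIndex = m := by
  refine le_antisymm (sSup_le ?_) (le_sSup ⟨m, h, rfl⟩)
  rintro _ ⟨j, hj, rfl⟩
  exact_mod_cast not_lt.mp fun hlt => h' (hj _ hlt)

theorem pIndex_eq_top_of_forall_isPartialIsometry_pow {A : Matrix ι ι ℂ}
    (h : ∀ i, (A ^ i).IsPartialIsometry) : A.pIndex = ⊤ := by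
  have huniv : {j : ℕ | ∀ i ≤ j, (A ^ i).IsPartialIsometry} = Set.univ :=
    Set.eq_univ_of_forall fun j i _ => h i
  rw [pIndex, huniv, Set.image_univ, sSup_range, ENat.iSup_natCast]

end Matrix

theorem pIndex_eq_ascent_or_top_of_isClassSn_general (n : ℕ) (A : Matrix (Fin n) (Fin n) ℂ)
    (hA : A.IsClassSn) :
    A.pIndex = (A.ascent : ℕ∞) ∨
      (A.pIndex = ⊤ ∧ ∀ ℓ : ℕ, 1 ≤ ℓ → (A ^ ℓ).IsPartialIsometry) := by
  obtain ⟨hcontr, hspec, hrank⟩ := hA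
  set T := toEuclideanLin A
  obtain ⟨d, hd⟩ := exists_adjoint_apply_apply_eq_sub_inner_smul hcontr <| by
    rw [← toEuclideanLin_one_sub_conjTranspose_mul_self, finrank_range_toEuclideanLin, hrank]
  set a := A.ascent
  have hdim : ∀ j ≤ a, j ≤ finrank ℂ (ker (T ^ j)) := fun j =>
    Module.End.le_finrank_ker_pow fun k => A.ker_pow_ne_of_lt_ascent
  have hPI : ∀ j ≤ a, (A ^ j).IsPartialIsometry := fun j hj =>
    (A.isPartialIsometry_pow_iff j).mpr fun x =>
      norm_pow_apply_eq_of_mem_orthogonal_ker hd (hdim j hj)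
  by_cases htop : ker (T ^ a) = ⊤
  · have hall : ∀ j, (A ^ j).IsPartialIsometry := fun j => by
      refine (le_or_gt j a).elim (hPI j) fun hj => (A.isPartialIsometry_pow_iff j).mpr ?_
      intro x hx
      rw [pow_eq_zero_of_le hj.le (ker_eq_top.mp htop), ker_zero, top_orthogonal_eq_bot,
        Submodule.mem_bot] at hx
      simp [hx]
    exact .inr ⟨A.pIndex_eq_top_of_forall_isPartialIsometry_pow hall, fun ℓ _ => hall ℓ⟩
  · refine .inl (A.pIndex_eq_of_not_isPartialIsometry_pow_succ hPI fun hPI' => ?_)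
    obtain ⟨x, hx, hne⟩ := exists_mem_orthogonal_ker_pow_succ_norm_ne hd
      (fun x => A.exists_norm_toEuclideanLin_pow_apply_lt hspec) A.ker_pow_ascent_eq
      (hdim a le_rfl) htop
    exact hne ((A.isPartialIsometry_pow_iff _).mp hPI' x hx)

/-- **Proposition 3.1 (b).** If `A` is a noninvertible matrix of class `S_n`, then
`p(A) = a(A)` or `p(A) = ∞` (i.e. every power of `A` is a partial isometry). -/
theorem pIndex_eq_ascent_or_top_of_isClassSn (n : ℕ) (A : Matrix (Fin n) (Fin n) ℂ)
    (hA : A.IsClassSn) (hni : ¬ IsUnit A) :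
    A.pIndex = (A.ascent : ℕ∞) ∨
      (A.pIndex = ⊤ ∧ ∀ ℓ : ℕ, 1 ≤ ℓ → (A ^ ℓ).IsPartialIsometry) :=
  pIndex_eq_ascent_or_top_of_isClassSn_general n A hA
end
end

section
/- Let A be a noninvertible matrix of class S_n. Then p(A) = ∞ (i.e., every power A^ℓ is a partial isometry) if and only if A is unitarily similar to the n-by-n nilpotent Jordan block J_n. -/
open Matrix

noncomputable section

/-!
Let `T` be `A` acting on `EuclideanSpace ℂ (Fin n)`. If all powers of `T` are partial isometries,
the kernels of `T^k` stabilise for `k ≥ n`, so `‖T^k v‖ = ‖T^(k+1) v‖` for every `v`; on an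
eigenvector this makes every eigenvalue `0` or unimodular, and the spectral condition of `S_n`
leaves only `0`, so `T` is nilpotent. As `ker A ⊆ range (1 - A*A)`, `ker T` has dimension at most
one, hence `dim ker T^(n-1) ≤ n - 1` and there is a unit vector `x ⊥ ker T^(n-1)`. A partial
isometry preserves inner products against vectors orthogonal to its kernel, so
`⟪T^p x, T^q x⟫ = ⟪x, T^(q-p) x⟫ = 0` for `p < q < n`: the chain `T^(n-1) x, …, T x, x` is an
orthonormal basis in which `T` is `J_n`.

Conversely, `V V* V = V` forces `V` to be a partial isometry; the identity holds for every power
of `J_n` and survives unitary conjugation.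
-/

open scoped InnerProductSpace

namespace LinearMap

variable {𝕜 E F : Type*} [RCLike 𝕜] [NormedAddCommGroup E] [InnerProductSpace 𝕜 E]
  [NormedAddCommGroup F] [InnerProductSpace 𝕜 F]

def IsPartialIsometry (f : E →ₗ[𝕜] F) : Prop :=
  ∀ x ∈ (ker f)ᗮ, ‖f x‖ = ‖x‖

namespace IsPartialIsometry

variable {f : E →ₗ[𝕜] F}

theorem inner_map_map (hf : f.IsPartialIsometry) [(ker f).HasOrthogonalProjection] {a : E}
    (ha : a ∈ (ker f)ᗮ) (b : E) : ⟪f a, f b⟫_𝕜 = ⟪a, b⟫_𝕜 := by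
  obtain ⟨b₀, hb₀, b₁, hb₁, rfl⟩ := (ker f).exists_add_mem_mem_orthogonal b
  let g : (ker f)ᗮ →ₗᵢ[𝕜] F := ⟨f ∘ₗ (ker f)ᗮ.subtype, fun v => hf v v.2⟩
  rw [map_add, mem_ker.mp hb₀, zero_add, inner_add_right, inner_eq_zero_symm.mp (ha b₀ hb₀),
    zero_add]
  exact g.inner_map_map ⟨a, ha⟩ ⟨b₁, hb₁⟩

theorem norm_map_eq_of_ker_eq {g : E →ₗ[𝕜] F} (hf : f.IsPartialIsometry)
    (hg : g.IsPartialIsometry) (hfg : ker f = ker g) [(ker f).HasOrthogonalProjection] (x : E) :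
    ‖f x‖ = ‖g x‖ := by
  obtain ⟨x₀, hx₀, x₁, hx₁, rfl⟩ := (ker f).exists_add_mem_mem_orthogonal x
  have hg₀ : x₀ ∈ ker g := hfg ▸ hx₀
  have hg₁ : x₁ ∈ (ker g)ᗮ := hfg ▸ hx₁
  rw [map_add, map_add, mem_ker.mp hx₀, mem_ker.mp hg₀, zero_add, zero_add, hf _ hx₁, hg _ hg₁]

end IsPartialIsometry

theorem isPartialIsometry_of_comp_adjoint_comp [FiniteDimensional 𝕜 E] [FiniteDimensional 𝕜 F]
    {f : E →ₗ[𝕜] F} (h : f ∘ₗ f.adjoint ∘ₗ f = f) : f.IsPartialIsometry := by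
  intro x hx
  have hker : f.adjoint (f x) - x ∈ ker f := by
    rw [mem_ker, map_sub, sub_eq_zero]
    exact LinearMap.congr_fun h x
  have hinner : ⟪f x, f x⟫_𝕜 = ⟪x, x⟫_𝕜 := by
    rw [← adjoint_inner_right, ← sub_add_cancel (f.adjoint (f x)) x, inner_add_right,
      inner_eq_zero_symm.mp (hx _ hker), zero_add]
  rw [inner_self_eq_norm_sq_to_K, inner_self_eq_norm_sq_to_K] at hinner
  exact (pow_left_inj₀ (norm_nonneg _) (norm_nonneg _) two_ne_zero).mp (by exact_mod_cast hinner)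

variable {K U V W : Type*} [Field K] [AddCommGroup U] [Module K U] [AddCommGroup V] [Module K V]
  [AddCommGroup W] [Module K W]

theorem finrank_ker_comp_le [FiniteDimensional K U] [FiniteDimensional K V] (f : U →ₗ[K] V)
    (g : V →ₗ[K] W) :
    Module.finrank K (ker (g ∘ₗ f)) ≤ Module.finrank K (ker g) + Module.finrank K (ker f) := by
  let r : ker (g ∘ₗ f) →ₗ[K] ker g := (f ∘ₗ (ker (g ∘ₗ f)).subtype).codRestrict _ fun x => x.2
  let s : ker r →ₗ[K] ker f :=
    ((ker (g ∘ₗ f)).subtype ∘ₗ (ker r).subtype).codRestrict _ fun x =>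
      congrArg Subtype.val (mem_ker.mp x.2)
  have hs : Function.Injective s := fun x y hxy => Subtype.ext (Subtype.ext congr(($hxy).1))
  have := r.finrank_range_add_finrank_ker
  have := Submodule.finrank_le (range r)
  have := finrank_le_finrank_of_injective hs
  omega

theorem finrank_ker_pow_le [FiniteDimensional K V] (f : Module.End K V) (k : ℕ) :
    Module.finrank K (ker (f ^ k)) ≤ k * Module.finrank K (ker f) := by
  induction k with
  | zero => simp [Module.End.one_eq_id]
  | succ k ih =>
    rw [pow_succ, Module.End.mul_eq_comp, add_one_mul]
    exact (finrank_ker_comp_le f (f ^ k)).trans (by omega)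

end LinearMap

namespace Module.End

variable {𝕜 E : Type*} [RCLike 𝕜] [NormedAddCommGroup E] [InnerProductSpace 𝕜 E]
  [FiniteDimensional 𝕜 E] {f : Module.End 𝕜 E}

theorem eq_zero_or_norm_eq_one_of_hasEigenvalue (hf : ∀ k, (f ^ k).IsPartialIsometry) {μ : 𝕜}
    (hμ : f.HasEigenvalue μ) : μ = 0 ∨ ‖μ‖ = 1 := by
  obtain ⟨v, hv⟩ := hμ.exists_hasEigenvector
  set m := Module.finrank 𝕜 E
  have hker : LinearMap.ker (f ^ m) = LinearMap.ker (f ^ (m + 1)) :=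
    (ker_pow_eq_ker_pow_finrank_of_le (Nat.le_succ m)).symm
  have key := (hf m).norm_map_eq_of_ker_eq (hf (m + 1)) hker v
  rw [hv.pow_apply, hv.pow_apply] at key
  simp only [norm_smul, norm_mul, norm_pow, pow_succ] at key
  refine or_iff_not_imp_left.mpr fun hμ0 => ?_
  exact (mul_eq_left₀ (pow_ne_zero m (norm_ne_zero_iff.mpr hμ0))).mp
    (mul_right_cancel₀ (norm_ne_zero_iff.mpr hv.2) key).symm

theorem orthonormal_pow_apply (hf : ∀ k, (f ^ k).IsPartialIsometry) {n : ℕ} (hn : f ^ n = 0)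
    {x : E} (hx : x ∈ (LinearMap.ker (f ^ (n - 1)))ᗮ) (hx1 : ‖x‖ = 1) :
    Orthonormal 𝕜 fun i : Fin n => (f ^ (i : ℕ)) x := by
  have hxk : ∀ k < n, x ∈ (LinearMap.ker (f ^ k))ᗮ := fun k hk =>
    Submodule.orthogonal_le (f.iterateKer.monotone (by omega)) hx
  have horth : ∀ p q, p < q → q < n → ⟪(f ^ p) x, (f ^ q) x⟫_𝕜 = 0 := by
    intro p q hpq hq
    have hmem : (f ^ (q - p)) x ∈ LinearMap.ker (f ^ (n - 1)) := by
      rw [LinearMap.mem_ker, ← mul_apply, ← pow_add, pow_eq_zero_of_le (by omega) hn,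
        LinearMap.zero_apply]
    rw [show q = p + (q - p) by omega, pow_add, mul_apply, (hf p).inner_map_map (hxk p (by omega))]
    exact inner_eq_zero_symm.mp (hx _ hmem)
  refine ⟨fun i => (hf i x (hxk i i.2)).trans hx1, fun i j hij => ?_⟩
  rcases lt_or_gt_of_ne (Fin.val_ne_of_ne hij) with h | h
  · exact horth i j h j.2
  · exact inner_eq_zero_symm.mp (horth j i h i.2)

end Module.End

namespace Matrix

variable {ι : Type*} [Fintype ι] [DecidableEq ι]

theorem pow_card_eq_zero_of_spectrum_subset_zero {K : Type*} [Field K] [IsAlgClosed K]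
    {A : Matrix ι ι K} (h : spectrum K A ⊆ {0}) : A ^ Fintype.card ι = 0 := by
  have hroots : A.charpoly.roots = Multiset.replicate (Fintype.card ι) 0 := by
    refine Multiset.eq_replicate.mpr ⟨?_, fun μ hμ => h ?_⟩
    · rw [← (IsAlgClosed.splits _).natDegree_eq_card_roots, charpoly_natDegree_eq_dim]
    · exact mem_spectrum_iff_isRoot_charpoly.mpr (Polynomial.isRoot_of_mem_roots hμ)
  have hchar : A.charpoly = Polynomial.X ^ Fintype.card ι := by
    rw [(IsAlgClosed.splits _).eq_prod_roots_of_monic (charpoly_monic A), hroots]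
    simp
  simpa [hchar] using aeval_self_charpoly A

theorem finrank_ker_toEuclideanLin_le_rank {κ 𝕜 : Type*} [Fintype κ] [DecidableEq κ] [RCLike 𝕜]
    (A : Matrix κ ι 𝕜) (B : Matrix ι κ 𝕜) :
    Module.finrank 𝕜 (LinearMap.ker (toEuclideanLin A)) ≤ (1 - B * A).rank := by
  rw [rank_eq_finrank_range_toLin _ (PiLp.basisFun 2 𝕜 ι) (PiLp.basisFun 2 𝕜 ι),
    ← toLpLin_eq_toLin]
  refine Submodule.finrank_mono fun x hx => ⟨x, ?_⟩
  rw [LinearMap.mem_ker] at hx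
  simp [toLpLin_mul_same, hx]

theorem isPartialIsometry_iff_toEuclideanLin {A : Matrix ι ι ℂ} :
    A.IsPartialIsometry ↔ (toEuclideanLin A).IsPartialIsometry :=
  Iff.rfl

theorem isPartialIsometry_of_mul_conjTranspose_mul_self {A : Matrix ι ι ℂ}
    (h : A * Aᴴ * A = A) : A.IsPartialIsometry :=
  isPartialIsometry_iff_toEuclideanLin.mpr <| LinearMap.isPartialIsometry_of_comp_adjoint_comp <| by
    rw [← toEuclideanLin_conjTranspose_eq_adjoint, ← toLpLin_mul_same, ← toLpLin_mul_same,
      ← Matrix.mul_assoc, h]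

theorem toEuclideanLin_pow_isPartialIsometry {A : Matrix ι ι ℂ}
    (hA : ∀ k, (A ^ k).IsPartialIsometry) (k : ℕ) : (toEuclideanLin A ^ k).IsPartialIsometry := by
  rw [← toLpLin_pow, ← isPartialIsometry_iff_toEuclideanLin]
  exact hA k

theorem pow_card_eq_zero_of_forall_pow_isPartialIsometry {A : Matrix ι ι ℂ}
    (hspec : ∀ z ∈ spectrum ℂ A, ‖z‖ < 1) (hA : ∀ k, (A ^ k).IsPartialIsometry) :
    A ^ Fintype.card ι = 0 := by
  refine pow_card_eq_zero_of_spectrum_subset_zero fun μ hμ => ?_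
  have hμ' : Module.End.HasEigenvalue (toEuclideanLin A) μ := by
    rwa [Module.End.hasEigenvalue_iff_mem_spectrum, spectrum_toLpLin]
  exact (Module.End.eq_zero_or_norm_eq_one_of_hasEigenvalue
    (toEuclideanLin_pow_isPartialIsometry hA) hμ').resolve_right (hspec μ hμ).ne

theorem conjTranspose_mul_self_eq_one_of_orthonormal {v : ι → EuclideanSpace ℂ ι}
    (hv : Orthonormal ℂ v) : (of fun a j => v j a)ᴴ * of (fun a j => v j a) = 1 := by
  ext i j
  rw [one_apply, ← orthonormal_iff_ite.mp hv i j]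
  simp [mul_apply, PiLp.inner_apply, mul_comm]

theorem unitarilySimilarTo_of_mul_eq_mul {A B U : Matrix ι ι ℂ} (hU : Uᴴ * U = 1)
    (h : A * U = U * B) : A.UnitarilySimilarTo B :=
  ⟨U, hU, mul_eq_one_comm.mp hU, by
    rw [Matrix.mul_assoc, h, ← Matrix.mul_assoc, hU, Matrix.one_mul]⟩

end Matrix

theorem jordanBlock_mulVec_apply {q : ℕ} (x : Fin q → ℂ) (a : Fin q) :
    (JordanBlock q *ᵥ x) a = if h : (a : ℕ) + 1 < q then x ⟨a + 1, h⟩ else 0 := by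
  simp only [mulVec, dotProduct, JordanBlock, of_apply, ite_mul, one_mul, zero_mul]
  split_ifs with h
  · rw [Finset.sum_eq_single_of_mem ⟨a + 1, h⟩ (Finset.mem_univ _)
      (fun b _ hb => if_neg fun hb' => hb (Fin.ext hb'))]
    simp
  · exact Finset.sum_eq_zero fun b _ => if_neg (by omega)

theorem jordanBlock_pow_mulVec_apply {q : ℕ} (ℓ : ℕ) (x : Fin q → ℂ) (a : Fin q) :
    (JordanBlock q ^ ℓ *ᵥ x) a = if h : (a : ℕ) + ℓ < q then x ⟨a + ℓ, h⟩ else 0 := by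
  induction ℓ generalizing x with
  | zero => simp
  | succ ℓ ih =>
    rw [pow_succ, ← mulVec_mulVec, ih]
    by_cases h : (a : ℕ) + (ℓ + 1) < q
    · rw [dif_pos (by omega), jordanBlock_mulVec_apply]
      simp only [add_assoc, dif_pos h]
    · rw [dif_neg h]
      split_ifs
      · rw [jordanBlock_mulVec_apply, dif_neg (by simp only; omega)]
      · rfl

theorem conjTranspose_jordanBlock_mulVec_apply {q : ℕ} (x : Fin q → ℂ) (a : Fin q) :
    ((JordanBlock q)ᴴ *ᵥ x) a = if h : 0 < (a : ℕ) then x ⟨a - 1, by omega⟩ else 0 := by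
  simp only [mulVec, dotProduct, JordanBlock, conjTranspose_apply, of_apply, apply_ite star,
    star_one, star_zero, ite_mul, one_mul, zero_mul]
  split_ifs with h
  · rw [Finset.sum_eq_single_of_mem ⟨a - 1, by omega⟩ (Finset.mem_univ _)
      (fun b _ hb => if_neg fun hb' => hb (Fin.ext (by simp only; omega)))]
    rw [if_pos (by simp only; omega)]
  · exact Finset.sum_eq_zero fun b _ => if_neg (by omega)

theorem conjTranspose_jordanBlock_pow_mulVec_apply {q : ℕ} (ℓ : ℕ) (x : Fin q → ℂ) (a : Fin q) :
    ((JordanBlock q ^ ℓ)ᴴ *ᵥ x) a = if h : ℓ ≤ (a : ℕ) then x ⟨a - ℓ, by omega⟩ else 0 := by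
  induction ℓ generalizing x with
  | zero => simp
  | succ ℓ ih =>
    rw [conjTranspose_pow, pow_succ, ← mulVec_mulVec, ← conjTranspose_pow, ih]
    by_cases h : ℓ + 1 ≤ (a : ℕ)
    · rw [dif_pos (by omega), conjTranspose_jordanBlock_mulVec_apply, dif_pos h]
      simp only [Nat.sub_add_eq, dif_pos (show 0 < (a : ℕ) - ℓ by omega)]
    · rw [dif_neg h]
      split_ifs
      · rw [conjTranspose_jordanBlock_mulVec_apply, dif_neg (by simp only; omega)]
      · rfl

theorem jordanBlock_pow_mul_conjTranspose_mul_self {q : ℕ} (ℓ : ℕ) :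
    JordanBlock q ^ ℓ * (JordanBlock q ^ ℓ)ᴴ * JordanBlock q ^ ℓ = JordanBlock q ^ ℓ := by
  refine ext_iff_mulVec.mpr fun x => funext fun a => ?_
  rw [← mulVec_mulVec, ← mulVec_mulVec, jordanBlock_pow_mulVec_apply, jordanBlock_pow_mulVec_apply]
  split_ifs with h
  · rw [conjTranspose_jordanBlock_pow_mulVec_apply, dif_pos (by simp only; omega),
      jordanBlock_pow_mulVec_apply, dif_pos (by simp only; omega)]
    simp
  · rfl

theorem mul_jordanBlock_apply {q : ℕ} (M : Matrix (Fin q) (Fin q) ℂ) (a j : Fin q) :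
    (M * JordanBlock q) a j = if h : 0 < (j : ℕ) then M a ⟨j - 1, by omega⟩ else 0 := by
  simp only [mul_apply, JordanBlock, of_apply, mul_ite, mul_one, mul_zero]
  split_ifs with h
  · rw [Finset.sum_eq_single_of_mem ⟨j - 1, by omega⟩ (Finset.mem_univ _)
      (fun b _ hb => if_neg fun hb' => hb (Fin.ext (by simp only; omega)))]
    rw [if_pos (by simp only; omega)]
  · exact Finset.sum_eq_zero fun b _ => if_neg (by omega)

namespace Matrix

variable {n : ℕ} {A : Matrix (Fin n) (Fin n) ℂ}

theorem unitarilySimilarTo_jordanBlock_of_orthonormal {v : Fin n → EuclideanSpace ℂ (Fin n)}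
    (hv : Orthonormal ℂ v)
    (hAv : ∀ j : Fin n,
      toEuclideanLin A (v j) = if h : 0 < (j : ℕ) then v ⟨j - 1, by omega⟩ else 0) :
    A.UnitarilySimilarTo (JordanBlock n) := by
  refine unitarilySimilarTo_of_mul_eq_mul (conjTranspose_mul_self_eq_one_of_orthonormal hv) ?_
  ext a j
  have hcol : (A * of fun a j => v j a) a j = toEuclideanLin A (v j) a := by
    simp [mul_apply, toLpLin_apply, mulVec, dotProduct]
  rw [mul_jordanBlock_apply, hcol, hAv]
  split_ifs <;> rfl

theorem unitarilySimilarTo_jordanBlock_of_forall_pow_isPartialIsometry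
    (hspec : ∀ z ∈ spectrum ℂ A, ‖z‖ < 1) (hrank : (1 - Aᴴ * A).rank = 1)
    (hA : ∀ k, (A ^ k).IsPartialIsometry) : A.UnitarilySimilarTo (JordanBlock n) := by
  set T := toEuclideanLin A
  have hT := toEuclideanLin_pow_isPartialIsometry hA
  have hnil : T ^ n = 0 := by
    have h := pow_card_eq_zero_of_forall_pow_isPartialIsometry hspec hA
    rw [Fintype.card_fin] at h
    rw [← toLpLin_pow, h, map_zero]
  have hn : 1 ≤ n := by
    have h := rank_le_card_width (1 - Aᴴ * A)
    rwa [hrank, Fintype.card_fin] at h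
  have hker : LinearMap.ker (T ^ (n - 1)) ≠ ⊤ := by
    intro htop
    have h := (LinearMap.finrank_ker_pow_le T (n - 1)).trans
      (Nat.mul_le_mul_left _ (hrank ▸ finrank_ker_toEuclideanLin_le_rank A Aᴴ))
    rw [htop, finrank_top, finrank_euclideanSpace_fin] at h
    omega
  obtain ⟨y, hy, hy0⟩ := (Submodule.ne_bot_iff _).mp (mt Submodule.orthogonal_eq_bot_iff.mp hker)
  obtain ⟨x, hx, hx1⟩ : ∃ x ∈ (LinearMap.ker (T ^ (n - 1)))ᗮ, ‖x‖ = 1 :=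
    ⟨_, Submodule.smul_mem _ (‖y‖⁻¹ : ℂ) hy, norm_smul_inv_norm hy0⟩
  refine unitarilySimilarTo_jordanBlock_of_orthonormal (v := fun j => (T ^ (j.rev : ℕ)) x)
    ((Module.End.orthonormal_pow_apply hT hnil hx hx1).comp _ Fin.rev_injective) fun j => ?_
  rw [← Module.End.mul_apply, ← pow_succ']
  split_ifs with h
  · congr 3
    simp only [Fin.val_rev]
    omega
  · rw [show (j.rev : ℕ) + 1 = n by simp only [Fin.val_rev]; omega, hnil, LinearMap.zero_apply]

theorem UnitarilySimilarTo.pow_isPartialIsometry_of_jordanBlock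
    (h : A.UnitarilySimilarTo (JordanBlock n)) (ℓ : ℕ) : (A ^ ℓ).IsPartialIsometry := by
  obtain ⟨U, hU, hU', hJ⟩ := h
  have hUJ : U * JordanBlock n = A * U := by
    rw [hJ, ← Matrix.mul_assoc, ← Matrix.mul_assoc, hU', Matrix.one_mul]
  have hpow : A ^ ℓ = U * JordanBlock n ^ ℓ * Uᴴ := by
    rw [(SemiconjBy.pow_right hUJ ℓ).eq, Matrix.mul_assoc, hU', Matrix.mul_one]
  refine isPartialIsometry_of_mul_conjTranspose_mul_self ?_
  calc A ^ ℓ * (A ^ ℓ)ᴴ * A ^ ℓ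
      = U * (JordanBlock n ^ ℓ * (Uᴴ * U) * (JordanBlock n ^ ℓ)ᴴ * (Uᴴ * U) *
          JordanBlock n ^ ℓ) * Uᴴ := by
        simp only [hpow, conjTranspose_mul, conjTranspose_conjTranspose, Matrix.mul_assoc]
    _ = A ^ ℓ := by
        rw [hU, Matrix.mul_one, Matrix.mul_one, jordanBlock_pow_mul_conjTranspose_mul_self, hpow]

theorem pIndex_eq_top_of_forall_isPartialIsometry {ι : Type*} [Fintype ι] [DecidableEq ι]
    {B : Matrix ι ι ℂ} (h : ∀ i : ℕ, (B ^ i).IsPartialIsometry) : B.pIndex = ⊤ := by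
  rw [pIndex, sSup_eq_top]
  intro b hb
  lift b to ℕ using hb.ne
  exact ⟨(b + 1 : ℕ), ⟨b + 1, fun i _ => h i, rfl⟩, by exact_mod_cast Nat.lt_succ_self b⟩

end Matrix

theorem pIndex_eq_top_iff_unitarilySimilar_jordan_general (n : ℕ) (A : Matrix (Fin n) (Fin n) ℂ)
    (hA : A.IsClassSn) :
    (A.pIndex = ⊤ ∧ ∀ ℓ : ℕ, 1 ≤ ℓ → (A ^ ℓ).IsPartialIsometry) ↔
      A.UnitarilySimilarTo (JordanBlock n) := by
  obtain ⟨-, hspec, hrank⟩ := hA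
  constructor
  · rintro ⟨-, hpow⟩
    refine unitarilySimilarTo_jordanBlock_of_forall_pow_isPartialIsometry hspec hrank fun ℓ => ?_
    rcases Nat.eq_zero_or_pos ℓ with rfl | hℓ
    · exact isPartialIsometry_of_mul_conjTranspose_mul_self (by simp)
    · exact hpow ℓ hℓ
  · intro hsim
    exact ⟨pIndex_eq_top_of_forall_isPartialIsometry hsim.pow_isPartialIsometry_of_jordanBlock,
      fun ℓ _ => hsim.pow_isPartialIsometry_of_jordanBlock ℓ⟩

/-- **Proposition 3.1 (c).** If `A` is a noninvertible matrix of class `S_n`, then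
`p(A) = ∞` (i.e. every power of `A` is a partial isometry) if and only if `A` is unitarily
similar to the Jordan block `J_n`. -/
theorem pIndex_eq_top_iff_unitarilySimilar_jordan (n : ℕ) (A : Matrix (Fin n) (Fin n) ℂ)
    (hA : A.IsClassSn) (hni : ¬ IsUnit A) :
    (A.pIndex = ⊤ ∧ ∀ ℓ : ℕ, 1 ≤ ℓ → (A ^ ℓ).IsPartialIsometry) ↔
      A.UnitarilySimilarTo (JordanBlock n) :=
  pIndex_eq_top_iff_unitarilySimilar_jordan_general n A hA
end
end
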